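/- arXiv:1603.05367 — 3 statements merged into one kernel-verified Lean document; each statement's English description precedes it below -/
import Mathlib

section
/- Let Q and B be real n×n matrices with Q symmetric positive semidefinite. If the Kalman rank condition Rank[Q^{1/2}, BQ^{1/2}, ..., B^{n-1}Q^{1/2}] = n holds, then there exist constants c > 0 and 0 < t₀ ≤ 1 such that for all 0 ≤ t ≤ t₀ and all X ∈ ℝⁿ, ∫₀ᵗ |Q^{1/2} e^{sBᵀ} X|² ds ≥ c t^{2k₀+1} |X|², where k₀ is the smallest integer such that Rank[Q^{1/2}, BQ^{1/2}, ..., B^{k₀}Q^{1/2}] = n. -/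
open Matrix intervalIntegral

open scoped ComplexOrder in
/-- The positive semidefinite square root of a positive semidefinite matrix (the definition
removed from Mathlib, restated with its old meaning). -/
noncomputable def Matrix.PosSemidef.sqrt {n 𝕜 : Type*} [Fintype n] [RCLike 𝕜] [DecidableEq n]
    {A : Matrix n n 𝕜} (hA : A.PosSemidef) : Matrix n n 𝕜 :=
  hA.1.eigenvectorUnitary.1 * diagonal ((↑) ∘ (√·) ∘ hA.1.eigenvalues) *
    (star hA.1.eigenvectorUnitary : Matrix n n 𝕜)

/-- The Kalman matrix `[R, BR, ..., B^k R]` obtained by concatenating the columns of the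
matrices `B^j * R` for `j = 0, ..., k`. -/
noncomputable def kalmanMatrix {n : ℕ} (R B : Matrix (Fin n) (Fin n) ℝ) (k : ℕ) :
    Matrix (Fin n) (Fin (k + 1) × Fin n) ℝ :=
  fun i p => (B ^ (p.1 : ℕ) * R) i p.2

/-!
Write `R = Q^{1/2}`, `A = Bᵀ` and `F(s) = R e^{sA} X`. Truncating the exponential series after
the power `k₀` gives `F(s) = P(s) + O(s^{k₀+1} |X|)`, where `P(s) = ∑_{j ≤ k₀} s^j w_j` and
`w_j = R A^j X / j!`. On the finite-dimensional space of polynomials of degree `≤ k₀` the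
`L²(0, 1)` norm is equivalent to the coefficient norm, so after the substitution `s = tσ` one gets
`∫₀ᵗ |P|² ≥ η t^{2k₀+1} ∑_j |w_j|²` for `t ≤ 1`. The Kalman rank condition says exactly that
`X ↦ (w_j)_{j ≤ k₀}` is injective, hence `∑_j |w_j|² ≥ δ |X|²` by compactness of the unit sphere.
Finally `|F|² ≥ |P|² / 2 - |F - P|²`, and the error integrates to `O(t^{2k₀+3} |X|²)`, which is
absorbed for small `t`.
-/

open Finset
open scoped Nat

theorem dotProduct_self_nonneg {n R : Type*} [Fintype n] [Ring R] [LinearOrder R]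
    [IsStrictOrderedRing R] (v : n → R) : 0 ≤ v ⬝ᵥ v :=
  Fintype.sum_nonneg fun i => mul_self_nonneg (v i)

theorem dotProduct_self_pos {n R : Type*} [Fintype n] [Ring R] [LinearOrder R]
    [IsStrictOrderedRing R] {v : n → R} (hv : v ≠ 0) : 0 < v ⬝ᵥ v :=
  (dotProduct_self_nonneg v).lt_of_ne' (dotProduct_self_eq_zero.not.mpr hv)

theorem dotProduct_self_le_two_mul_add {n R : Type*} [Fintype n] [CommRing R] [LinearOrder R]
    [IsStrictOrderedRing R] (u v : n → R) :
    (u + v) ⬝ᵥ (u + v) ≤ 2 * (u ⬝ᵥ u + v ⬝ᵥ v) := by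
  have := dotProduct_self_nonneg (u - v)
  simp only [add_dotProduct, dotProduct_add, sub_dotProduct, dotProduct_sub,
    dotProduct_comm v u] at *
  linarith

theorem exists_pos_mul_le_of_homogeneous {E : Type*} [NormedAddCommGroup E] [NormedSpace ℝ E]
    [FiniteDimensional ℝ E] {f g : E → ℝ} (hf : Continuous f) (hg : Continuous g)
    (hf_smul : ∀ (r : ℝ) x, f (r • x) = r ^ 2 * f x)
    (hg_smul : ∀ (r : ℝ) x, g (r • x) = r ^ 2 * g x) (hg_pos : ∀ x, x ≠ 0 → 0 < g x) :
    ∃ c > 0, ∀ x, c * f x ≤ g x := by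
  have hS := isCompact_sphere (0 : E) 1
  obtain ⟨M, hM⟩ := hS.exists_bound_of_continuousOn hf.continuousOn
  obtain ⟨m, hm, hmg⟩ := hS.exists_forall_le' hg.continuousOn fun u hu =>
    hg_pos u (ne_zero_of_mem_unit_sphere ⟨u, hu⟩)
  refine ⟨m / (|M| + 1), by positivity, fun x => ?_⟩
  rcases eq_or_ne x 0 with rfl | hx
  · simp [by simpa using hf_smul 0 0, by simpa using hg_smul 0 0]
  set u := ‖x‖⁻¹ • x
  have hu : u ∈ Metric.sphere (0 : E) 1 := by simp [u, norm_smul, hx]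
  have hfu : m / (|M| + 1) * f u ≤ g u := calc
    m / (|M| + 1) * f u ≤ m / (|M| + 1) * (|M| + 1) := by
      gcongr
      linarith [Real.le_norm_self (f u), hM u hu, le_abs_self M]
    _ = m := by field_simp
    _ ≤ g u := hmg u hu
  rw [show x = ‖x‖ • u by simp [u, smul_smul, hx], hf_smul, hg_smul]
  nlinarith [sq_nonneg ‖x‖]

theorem exists_mem_Ioo_sum_pow_smul_ne_zero {ι : Type*} {m : ℕ} {v : Fin m → ι → ℝ}
    (hv : v ≠ 0) : ∃ σ ∈ Set.Ioo (0 : ℝ) 1, ∑ j : Fin m, σ ^ (j : ℕ) • v j ≠ 0 := by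
  obtain ⟨j₀, i, hj₀⟩ : ∃ j i, v j i ≠ 0 := by
    by_contra! h
    exact hv (funext fun j => funext (h j))
  set p : Polynomial ℝ := ∑ j : Fin m, Polynomial.C (v j i) * Polynomial.X ^ (j : ℕ)
  have hp : p ≠ 0 := fun hp => hj₀ <| by
    simpa [p, Polynomial.finsetSum_coeff, Fin.val_inj] using congrArg (Polynomial.coeff · j₀) hp
  by_contra! h
  refine hp (p.eq_zero_of_infinite_isRoot ((Set.Ioo_infinite zero_lt_one).mono fun σ hσ => ?_))
  have := congrFun (h σ hσ) i
  rw [Finset.sum_apply] at this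
  simp only [Polynomial.IsRoot.def, p, Polynomial.eval_finsetSum, Polynomial.eval_mul,
    Polynomial.eval_C, Polynomial.eval_pow, Polynomial.eval_X]
  simpa [mul_comm] using this

theorem exists_pos_mul_le_integral_unitInterval_dotProduct_sum_pow_smul (ι : Type*) [Fintype ι]
    (m : ℕ) : ∃ c > 0, ∀ v : Fin m → ι → ℝ, c * ∑ j, v j ⬝ᵥ v j ≤
      ∫ σ in (0 : ℝ)..1,
        (∑ j : Fin m, σ ^ (j : ℕ) • v j) ⬝ᵥ (∑ j : Fin m, σ ^ (j : ℕ) • v j) :=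
  exists_pos_mul_le_of_homogeneous (by fun_prop)
    (continuous_parametric_intervalIntegral_of_continuous' (by fun_prop) _ _)
    (fun r v => by
      simp only [Pi.smul_apply, dotProduct_smul, smul_dotProduct, smul_eq_mul, mul_sum]
      exact sum_congr rfl fun j _ => by ring)
    (fun r v => by
      simp only [Pi.smul_apply, smul_comm _ r, ← smul_sum, smul_dotProduct, dotProduct_smul,
        smul_eq_mul, integral_const_mul]
      ring)
    (fun v hv => by
      obtain ⟨σ, hσ, hne⟩ := exists_mem_Ioo_sum_pow_smul_ne_zero hv
      exact integral_pos zero_lt_one (by fun_prop) (fun x _ => dotProduct_self_nonneg _)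
        ⟨σ, Set.Ioo_subset_Icc_self hσ, dotProduct_self_pos hne⟩)

theorem exists_pos_mul_le_integral_dotProduct_sum_pow_smul (ι : Type*) [Fintype ι] (k : ℕ) :
    ∃ c > 0, ∀ (w : ℕ → ι → ℝ) (t : ℝ), 0 ≤ t → t ≤ 1 →
      c * t ^ (2 * k + 1) * ∑ j ∈ range (k + 1), w j ⬝ᵥ w j ≤
        ∫ s in (0 : ℝ)..t,
          (∑ j ∈ range (k + 1), s ^ j • w j) ⬝ᵥ (∑ j ∈ range (k + 1), s ^ j • w j) := by
  obtain ⟨c, hc, hcoer⟩ := exists_pos_mul_le_integral_unitInterval_dotProduct_sum_pow_smul ι (k + 1)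
  refine ⟨c, hc, fun w t ht0 ht1 => ?_⟩
  set v : Fin (k + 1) → ι → ℝ := fun j => t ^ (j : ℕ) • w j
  have hv : t ^ (2 * k) * ∑ j ∈ range (k + 1), w j ⬝ᵥ w j ≤ ∑ j, v j ⬝ᵥ v j := by
    rw [mul_sum, ← Fin.sum_univ_eq_sum_range (fun j => t ^ (2 * k) * w j ⬝ᵥ w j)]
    refine sum_le_sum fun j _ => ?_
    simp only [v, smul_dotProduct, dotProduct_smul, smul_eq_mul, ← mul_assoc, ← pow_add]
    exact mul_le_mul_of_nonneg_right (pow_le_pow_of_le_one ht0 ht1 (by omega))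
      (dotProduct_self_nonneg _)
  have hscale : ∀ σ : ℝ,
      ∑ j ∈ range (k + 1), (t * σ) ^ j • w j = ∑ j : Fin (k + 1), σ ^ (j : ℕ) • v j := by
    intro σ
    simp only [v, smul_smul, ← mul_pow, mul_comm σ]
    exact (Fin.sum_univ_eq_sum_range (fun j => (t * σ) ^ j • w j) _).symm
  calc c * t ^ (2 * k + 1) * ∑ j ∈ range (k + 1), w j ⬝ᵥ w j
      = t * (c * (t ^ (2 * k) * ∑ j ∈ range (k + 1), w j ⬝ᵥ w j)) := by ring
    _ ≤ t * (c * ∑ j, v j ⬝ᵥ v j) := by gcongr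
    _ ≤ t * ∫ σ in (0 : ℝ)..1,
          (∑ j : Fin (k + 1), σ ^ (j : ℕ) • v j) ⬝ᵥ (∑ j : Fin (k + 1), σ ^ (j : ℕ) • v j) := by
      gcongr; exact hcoer v
    _ = _ := by
      simp only [← hscale]
      simpa using smul_integral_comp_mul_left (a := 0) (b := 1)
        (fun s => (∑ j ∈ range (k + 1), s ^ j • w j) ⬝ᵥ (∑ j ∈ range (k + 1), s ^ j • w j)) t

theorem half_sub_mul_le_integral_dotProduct_self {ι : Type*} [Fintype ι] {f p : ℝ → ι → ℝ}
    (hf : Continuous f) (hp : Continuous p) {t a b : ℝ} (ht : 0 ≤ t)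
    (ha : a ≤ ∫ s in (0 : ℝ)..t, p s ⬝ᵥ p s)
    (hb : ∀ s ∈ Set.Icc 0 t, (f s - p s) ⬝ᵥ (f s - p s) ≤ b) :
    a / 2 - t * b ≤ ∫ s in (0 : ℝ)..t, f s ⬝ᵥ f s := by
  have hrem : ∫ s in (0 : ℝ)..t, (f s - p s) ⬝ᵥ (f s - p s) ≤ t * b := by
    simpa using integral_mono_on (μ := MeasureTheory.volume) ht
      ((by fun_prop : Continuous _).intervalIntegrable _ _) intervalIntegrable_const hb
  have hpt : ∀ s ∈ Set.Icc 0 t,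
      p s ⬝ᵥ p s / 2 - (f s - p s) ⬝ᵥ (f s - p s) ≤ f s ⬝ᵥ f s := fun s _ => by
    have := dotProduct_self_le_two_mul_add (f s) (p s - f s)
    rw [add_sub_cancel, ← neg_sub, neg_dotProduct, dotProduct_neg, neg_neg] at this
    linarith
  calc a / 2 - t * b
      ≤ (∫ s in (0 : ℝ)..t, p s ⬝ᵥ p s) / 2 -
          ∫ s in (0 : ℝ)..t, (f s - p s) ⬝ᵥ (f s - p s) := by linarith
    _ = ∫ s in (0 : ℝ)..t, (p s ⬝ᵥ p s / 2 - (f s - p s) ⬝ᵥ (f s - p s)) := by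
        rw [integral_sub, integral_div] <;>
          exact (by fun_prop : Continuous _).intervalIntegrable _ _
    _ ≤ ∫ s in (0 : ℝ)..t, f s ⬝ᵥ f s :=
        integral_mono_on ht ((by fun_prop : Continuous _).intervalIntegrable _ _)
          ((by fun_prop : Continuous _).intervalIntegrable _ _) hpt

namespace NormedSpace

variable {𝔸 : Type*} [NormedRing 𝔸] [NormedAlgebra ℝ 𝔸] [CompleteSpace 𝔸]

theorem norm_exp_sub_sum_range_succ_le (a : 𝔸) (k : ℕ) :
    ‖exp a - ∑ j ∈ range (k + 1), (j ! : ℝ)⁻¹ • a ^ j‖ ≤ ‖a‖ ^ (k + 1) * Real.exp ‖a‖ := by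
  have htail : exp a - ∑ j ∈ range (k + 1), (j ! : ℝ)⁻¹ • a ^ j
      = ∑' i, ((i + (k + 1)) ! : ℝ)⁻¹ • a ^ (i + (k + 1)) := by
    rw [congrFun (exp_eq_tsum (𝕂 := ℝ)) a,
      ← (expSeries_summable' (𝕂 := ℝ) a).sum_add_tsum_nat_add (k + 1), add_sub_cancel_left]
  have hbound : ∀ i, ‖((i + (k + 1)) ! : ℝ)⁻¹ • a ^ (i + (k + 1))‖
      ≤ ‖a‖ ^ (k + 1) * (‖a‖ ^ i / i !) := by
    intro i
    rw [norm_smul, norm_inv, Real.norm_natCast]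
    calc ((i + (k + 1)) ! : ℝ)⁻¹ * ‖a ^ (i + (k + 1))‖
        ≤ (i ! : ℝ)⁻¹ * ‖a‖ ^ (i + (k + 1)) := by
          gcongr
          · exact Nat.le_add_right _ _
          · exact norm_pow_le' a (Nat.add_pos_right _ k.succ_pos)
      _ = ‖a‖ ^ (k + 1) * (‖a‖ ^ i / i !) := by ring
  rw [htail, Real.exp_eq_exp_ℝ, exp_eq_tsum_div, ← tsum_mul_left]
  exact tsum_of_norm_bounded ((Real.summable_pow_div_factorial ‖a‖).mul_left _).hasSum hbound

theorem continuous_exp_smul (a : 𝔸) : Continuous fun s : ℝ => exp (s • a) :=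
  continuous_iff_continuousAt.2 fun s => (hasDerivAt_exp_smul_const a s).continuousAt

end NormedSpace

open scoped ComplexOrder in
theorem Matrix.PosSemidef.isHermitian_sqrt {n 𝕜 : Type*} [Fintype n] [RCLike 𝕜]
    [DecidableEq n] {A : Matrix n n 𝕜} (hA : A.PosSemidef) : hA.sqrt.IsHermitian := by
  simp [IsHermitian, sqrt, conjTranspose_mul, Matrix.mul_assoc, star_eq_conjTranspose,
    Pi.star_def, Function.comp_def, RCLike.star_def]

theorem Matrix.mulVec_transpose_injective_of_rank_eq_card {m p K : Type*} [Fintype m]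
    [Fintype p] [Field K] {A : Matrix m p K} (hA : A.rank = Fintype.card m) :
    Function.Injective Aᵀ.mulVec := by
  have h := Aᵀ.mulVecLin.finrank_range_add_finrank_ker
  rw [← Matrix.rank, rank_transpose, hA, Module.finrank_fintype_fun_eq_card] at h
  have hker : Module.finrank K (LinearMap.ker Aᵀ.mulVecLin) = 0 := by omega
  exact LinearMap.ker_eq_bot.mp (Submodule.finrank_eq_zero.mp hker)

theorem exists_mul_pow_mulVec_ne_zero_of_rank_kalmanMatrix {n k : ℕ}
    {R B : Matrix (Fin n) (Fin n) ℝ} (hR : Rᵀ = R) (hK : (kalmanMatrix R B k).rank = n)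
    {X : Fin n → ℝ} (hX : X ≠ 0) : ∃ j ≤ k, (R * Bᵀ ^ j) *ᵥ X ≠ 0 := by
  have hKX : (kalmanMatrix R B k)ᵀ *ᵥ X ≠ 0 := fun h =>
    hX (mulVec_transpose_injective_of_rank_eq_card (by simpa using hK)
      (h.trans (mulVec_zero _).symm))
  obtain ⟨⟨j, l⟩, hjl⟩ := Function.ne_iff.mp hKX
  refine ⟨j, Nat.lt_succ_iff.mp j.2, fun h => hjl ?_⟩
  have hcol : R * Bᵀ ^ (j : ℕ) = (B ^ (j : ℕ) * R)ᵀ := by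
    rw [transpose_mul, transpose_pow, hR]
  simpa [hcol, mulVec, dotProduct, kalmanMatrix, mul_comm] using congrFun h l

noncomputable def expTaylorCoeff {n : Type*} [Fintype n] [DecidableEq n] (R A : Matrix n n ℝ)
    (X : n → ℝ) (j : ℕ) : n → ℝ :=
  (j ! : ℝ)⁻¹ • ((R * A ^ j) *ᵥ X)

theorem exists_pos_mul_le_sum_expTaylorCoeff {n k : ℕ} {R B : Matrix (Fin n) (Fin n) ℝ}
    (hR : Rᵀ = R) (hK : (kalmanMatrix R B k).rank = n) :
    ∃ δ > 0, ∀ X, δ * (X ⬝ᵥ X) ≤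
      ∑ j ∈ range (k + 1), expTaylorCoeff R Bᵀ X j ⬝ᵥ expTaylorCoeff R Bᵀ X j := by
  refine exists_pos_mul_le_of_homogeneous (by fun_prop) (by unfold expTaylorCoeff; fun_prop)
    (fun r X => by simp only [dotProduct_smul, smul_dotProduct, smul_eq_mul]; ring)
    (fun r X => by
      simp only [expTaylorCoeff, mulVec_smul, smul_comm _ r, smul_dotProduct, dotProduct_smul,
        smul_eq_mul, mul_sum]
      exact sum_congr rfl fun j _ => by ring)
    (fun X hX => ?_)
  obtain ⟨j, hjk, hj⟩ := exists_mul_pow_mulVec_ne_zero_of_rank_kalmanMatrix hR hK hX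
  exact sum_pos' (fun i _ => dotProduct_self_nonneg _) ⟨j, mem_range.2 (Nat.lt_succ_of_le hjk),
    dotProduct_self_pos (smul_ne_zero (by positivity) hj)⟩

section
open scoped Matrix.Norms.L2Operator

theorem dotProduct_mulVec_self_le {m n : Type*} [Fintype m] [Fintype n] [DecidableEq n]
    (M : Matrix m n ℝ) (x : n → ℝ) : (M *ᵥ x) ⬝ᵥ (M *ᵥ x) ≤ ‖M‖ ^ 2 * (x ⬝ᵥ x) := calc
  (M *ᵥ x) ⬝ᵥ (M *ᵥ x) = ‖WithLp.toLp 2 (M *ᵥ x)‖ ^ 2 := by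
    rw [EuclideanSpace.real_norm_sq_eq]; simp [dotProduct, sq]
  _ ≤ (‖M‖ * ‖WithLp.toLp 2 x‖) ^ 2 := by gcongr; exact l2_opNorm_mulVec M (WithLp.toLp 2 x)
  _ = ‖M‖ ^ 2 * (x ⬝ᵥ x) := by
    rw [mul_pow, EuclideanSpace.real_norm_sq_eq]; simp [dotProduct, sq]

theorem Matrix.continuous_exp_smul {n : Type*} [Fintype n] [DecidableEq n] (A : Matrix n n ℝ) :
    Continuous fun s : ℝ => NormedSpace.exp (s • A) :=
  NormedSpace.continuous_exp_smul A

theorem exists_dotProduct_exp_taylor_remainder_le {n : Type*} [Fintype n] [DecidableEq n]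
    (R A : Matrix n n ℝ) (k : ℕ) :
    ∃ C ≥ 0, ∀ s : ℝ, 0 ≤ s → s ≤ 1 → ∀ X : n → ℝ,
      (R *ᵥ (NormedSpace.exp (s • A) *ᵥ X) - ∑ j ∈ range (k + 1), s ^ j • expTaylorCoeff R A X j) ⬝ᵥ
        (R *ᵥ (NormedSpace.exp (s • A) *ᵥ X) - ∑ j ∈ range (k + 1), s ^ j • expTaylorCoeff R A X j)
        ≤ C * s ^ (2 * k + 2) * (X ⬝ᵥ X) := by
  refine ⟨(‖R‖ * ‖A‖ ^ (k + 1) * Real.exp ‖A‖) ^ 2, sq_nonneg _, fun s hs0 hs1 X => ?_⟩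
  set D := NormedSpace.exp (s • A) - ∑ j ∈ range (k + 1), (j ! : ℝ)⁻¹ • (s • A) ^ j
  have hD : ‖D‖ ≤ ‖A‖ ^ (k + 1) * Real.exp ‖A‖ * s ^ (k + 1) := calc
    ‖D‖ ≤ ‖s • A‖ ^ (k + 1) * Real.exp ‖s • A‖ :=
      NormedSpace.norm_exp_sub_sum_range_succ_le (s • A) k
    _ = s ^ (k + 1) * ‖A‖ ^ (k + 1) * Real.exp (s * ‖A‖) := by
      rw [norm_smul, Real.norm_of_nonneg hs0, mul_pow]
    _ ≤ s ^ (k + 1) * ‖A‖ ^ (k + 1) * Real.exp ‖A‖ := by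
      gcongr; exact mul_le_of_le_one_left (norm_nonneg _) hs1
    _ = _ := by ring
  have hrem : R *ᵥ (NormedSpace.exp (s • A) *ᵥ X) -
      ∑ j ∈ range (k + 1), s ^ j • expTaylorCoeff R A X j = (R * D) *ᵥ X := by
    simp [D, expTaylorCoeff, sub_mulVec, mulVec_sub, sum_mulVec, mulVec_sum, smul_pow,
      ← mulVec_mulVec, smul_smul, mul_comm, smul_mulVec, mulVec_smul]
  rw [hrem]
  calc ((R * D) *ᵥ X) ⬝ᵥ ((R * D) *ᵥ X) ≤ ‖R * D‖ ^ 2 * (X ⬝ᵥ X) := dotProduct_mulVec_self_le _ X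
    _ ≤ (‖R‖ * (‖A‖ ^ (k + 1) * Real.exp ‖A‖ * s ^ (k + 1))) ^ 2 * (X ⬝ᵥ X) := by
      gcongr
      · exact dotProduct_self_nonneg X
      · exact (norm_mul_le _ _).trans (by gcongr)
    _ = _ := by ring

end

theorem stmt0_general {n : ℕ} (Q B : Matrix (Fin n) (Fin n) ℝ) (hQ : Q.PosSemidef)
    (k₀ : ℕ) (hk₀ : IsLeast {k : ℕ | (kalmanMatrix hQ.sqrt B k).rank = n} k₀) :
    ∃ c : ℝ, 0 < c ∧ ∃ t₀ : ℝ, 0 < t₀ ∧ t₀ ≤ 1 ∧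
      ∀ t : ℝ, 0 ≤ t → t ≤ t₀ → ∀ X : Fin n → ℝ,
        c * t ^ (2 * k₀ + 1) * (X ⬝ᵥ X) ≤
          ∫ s in (0:ℝ)..t,
            (hQ.sqrt.mulVec ((NormedSpace.exp (s • Bᵀ)).mulVec X)) ⬝ᵥ
              (hQ.sqrt.mulVec ((NormedSpace.exp (s • Bᵀ)).mulVec X)) := by
  set R := hQ.sqrt
  have hR : Rᵀ = R := (conjTranspose_eq_transpose_of_trivial R).symm.trans hQ.isHermitian_sqrt
  obtain ⟨δ, hδ, hkalman⟩ := exists_pos_mul_le_sum_expTaylorCoeff hR hk₀.1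
  obtain ⟨η, hη, hpoly⟩ := exists_pos_mul_le_integral_dotProduct_sum_pow_smul (Fin n) k₀
  obtain ⟨C, hC, hrem⟩ := exists_dotProduct_exp_taylor_remainder_le R Bᵀ k₀
  set c := η * δ
  refine ⟨c / 4, by positivity, min 1 (c / (4 * (C + 1))), by positivity, min_le_left _ _,
    fun t ht0 htt₀ X => ?_⟩
  have ht1 : t ≤ 1 := htt₀.trans (min_le_left _ _)
  have htC : C * t ^ 2 ≤ c / 4 := by
    have := (le_div_iff₀ (by positivity)).1 (htt₀.trans (min_le_right _ _))
    nlinarith [mul_le_mul_of_nonneg_left (pow_le_of_le_one ht0 ht1 two_ne_zero) hC]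
  have key := half_sub_mul_le_integral_dotProduct_self
    (f := fun s => R *ᵥ (NormedSpace.exp (s • Bᵀ) *ᵥ X))
    (p := fun s => ∑ j ∈ range (k₀ + 1), s ^ j • expTaylorCoeff R Bᵀ X j)
    (a := c * t ^ (2 * k₀ + 1) * (X ⬝ᵥ X)) (b := C * t ^ (2 * k₀ + 2) * (X ⬝ᵥ X))
    (continuous_const.matrix_mulVec ((continuous_exp_smul Bᵀ).matrix_mulVec continuous_const))
    (by fun_prop) ht0 ?_ ?_
  · have hT : 0 ≤ t ^ (2 * k₀ + 1) * (X ⬝ᵥ X) := by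
      have := dotProduct_self_nonneg X; positivity
    have : t * (C * t ^ (2 * k₀ + 2) * (X ⬝ᵥ X)) = C * t ^ 2 * (t ^ (2 * k₀ + 1) * (X ⬝ᵥ X)) := by
      ring
    linarith [mul_le_mul_of_nonneg_right htC hT]
  · calc c * t ^ (2 * k₀ + 1) * (X ⬝ᵥ X) = η * t ^ (2 * k₀ + 1) * (δ * (X ⬝ᵥ X)) := by ring
      _ ≤ _ := by gcongr; exact hkalman X
      _ ≤ _ := hpoly _ t ht0 ht1
  · intro s hs
    exact (hrem s hs.1 (hs.2.trans ht1) X).trans <| mul_le_mul_of_nonneg_right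
      (mul_le_mul_of_nonneg_left (pow_le_pow_left₀ hs.1 hs.2 _) hC) (dotProduct_self_nonneg X)

/-- if the Kalman rank condition holds, then there exist `c > 0` and
`0 < t₀ ≤ 1` such that for all `0 ≤ t ≤ t₀` and all `X ∈ ℝⁿ`,
`∫₀ᵗ |Q^{1/2} e^{sBᵀ} X|² ds ≥ c t^{2k₀+1} |X|²`, where `k₀` is the smallest integer with
`Rank[Q^{1/2}, ..., B^{k₀}Q^{1/2}] = n`. -/
theorem stmt0 {n : ℕ} (Q B : Matrix (Fin n) (Fin n) ℝ) (hQ : Q.PosSemidef)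
    (hKal : (kalmanMatrix hQ.sqrt B (n - 1)).rank = n)
    (k₀ : ℕ) (hk₀ : IsLeast {k : ℕ | (kalmanMatrix hQ.sqrt B k).rank = n} k₀) :
    ∃ c : ℝ, 0 < c ∧ ∃ t₀ : ℝ, 0 < t₀ ∧ t₀ ≤ 1 ∧
      ∀ t : ℝ, 0 ≤ t → t ≤ t₀ → ∀ X : Fin n → ℝ,
        c * t ^ (2 * k₀ + 1) * (X ⬝ᵥ X) ≤
          ∫ s in (0:ℝ)..t,
            (hQ.sqrt.mulVec ((NormedSpace.exp (s • Bᵀ)).mulVec X)) ⬝ᵥ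
              (hQ.sqrt.mulVec ((NormedSpace.exp (s • Bᵀ)).mulVec X)) :=
  stmt0_general Q B hQ k₀ hk₀
end

section
/- One-step estimate in the adapted Lebeau-Robbiano method: under the hypotheses of the abstract observability theorem (spectral inequality with exponent a and constant c₁, dissipation estimate with exponents m, b and constant c₂, a < b), for every q > 0 there exist 0 < τ₀'(q) < t₀ and M(q) > 0 such that for all 0 < τ < τ₀'(q) and all g ∈ L²(Ω), f_q(τ) ‖e^{τA} g‖² − f_q(qτ) ‖g‖² ≤ ∫_{τ/2}^{τ} ‖e^{tA} g‖²_{L²(ω)} dt, where f_q(s) = exp(−M(q)/s^{am/(b-a)}). -/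
/-!
For `t ∈ [τ/2, τ]` split `S t g` into its low-frequency part `π k (S t g)`, which the spectral
inequality observes from `ω` at the cost `e^{c₁kᵃ}`, and the remainder, which the dissipation
estimate bounds by `D‖g‖` with `D = e^{-c₂(τ/2)ᵐkᵇ}/c₂`. Since `‖S t g‖ ≥ ‖S τ g‖`, integrating
over `[τ/2, τ]` gives `τ e^{-2c₁kᵃ}‖S τ g‖²/4 - 2τD²‖g‖² ≤ ∫ ‖S t g‖²_ω`. With the frequency
`k ≈ K τ^{-m/(b-a)}` both `kᵃ` and `τᵐkᵇ` are of order `τ^{-am/(b-a)}`, and because `a < b` a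
large `K` makes the dissipation gain beat the spectral cost by the factor `q^{-am/(b-a)}`.
-/

open MeasureTheory Set

theorem MeasureTheory.L2.norm_sq_eq_integral_norm_sq {α E : Type*} [MeasurableSpace α]
    {μ : Measure α} [NormedAddCommGroup E] [InnerProductSpace ℝ E] (f : α →₂[μ] E) :
    ‖f‖ ^ 2 = ∫ x, ‖f x‖ ^ 2 ∂μ := by
  rw [← real_inner_self_eq_norm_sq, L2.inner_def]
  simp_rw [real_inner_self_eq_norm_sq]

theorem MeasureTheory.setIntegral_norm_sq_eq_norm_LpToLpRestrictCLM_sq {α E : Type*}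
    [MeasurableSpace α] {μ : Measure α} [NormedAddCommGroup E] [InnerProductSpace ℝ E]
    (𝕜 : Type*) [NormedField 𝕜] [NormedSpace 𝕜 E] (s : Set α) (f : α →₂[μ] E) :
    ∫ x in s, ‖f x‖ ^ 2 ∂μ = ‖LpToLpRestrictCLM α E 𝕜 μ 2 s f‖ ^ 2 := by
  rw [L2.norm_sq_eq_integral_norm_sq]
  refine integral_congr_ae ?_
  filter_upwards [LpToLpRestrictCLM_coeFn 𝕜 s f] with x hx
  rw [hx]

section Observability

variable {𝕜 F G : Type*} [NontriviallyNormedField 𝕜] [SeminormedAddCommGroup F]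
  [NormedSpace 𝕜 F] [SeminormedAddCommGroup G] [NormedSpace 𝕜 G]

theorem antitoneOn_norm_apply_of_contraction_semigroup {S : ℝ → F →L[𝕜] F}
    (hsemi : ∀ s t : ℝ, 0 ≤ s → 0 ≤ t → S (s + t) = (S s).comp (S t))
    (hcontr : ∀ t : ℝ, 0 ≤ t → ‖S t‖ ≤ 1) (g : F) :
    AntitoneOn (fun t => ‖S t g‖) (Ici 0) := by
  intro s (hs : 0 ≤ s) t _ hst
  calc ‖S t g‖ = ‖S (t - s) (S s g)‖ := by
        rw [← ContinuousLinearMap.comp_apply, ← hsemi _ _ (sub_nonneg.2 hst) hs, sub_add_cancel]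
    _ ≤ ‖S s g‖ := by simpa using (S (t - s)).le_of_opNorm_le (hcontr _ (sub_nonneg.2 hst)) _

theorem sq_norm_le_of_spectral_of_dissipation (R : F →L[𝕜] G) (hR : ∀ v, ‖R v‖ ≤ ‖v‖)
    {u p : F} {E δ : ℝ} (hE : 1 ≤ E) (hspec : ‖p‖ ≤ E * ‖R p‖) (hdiss : ‖u - p‖ ≤ δ) :
    ‖u‖ ^ 2 ≤ 2 * E ^ 2 * ‖R u‖ ^ 2 + 8 * E ^ 2 * δ ^ 2 := by
  have hδ : 0 ≤ δ := (norm_nonneg _).trans hdiss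
  have hRp : ‖R p‖ ≤ ‖R u‖ + δ :=
    calc ‖R p‖ ≤ ‖R u‖ + ‖R (p - u)‖ := by rw [map_sub]; exact norm_le_insert' _ _
      _ ≤ ‖R u‖ + δ := by grw [hR (p - u), norm_sub_rev, hdiss]
  have hu : ‖u‖ ≤ E * ‖R u‖ + 2 * E * δ :=
    calc ‖u‖ ≤ ‖p‖ + ‖u - p‖ := norm_le_insert' _ _
      _ ≤ E * (‖R u‖ + δ) + δ := by grw [hspec, hRp, hdiss]
      _ ≤ E * ‖R u‖ + 2 * E * δ := by nlinarith
  nlinarith [pow_le_pow_left₀ (norm_nonneg u) hu 2, sq_nonneg (‖R u‖ - 2 * δ)]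

theorem integral_sq_norm_observation_ge {S : ℝ → F →L[𝕜] F}
    (hsemi : ∀ s t : ℝ, 0 ≤ s → 0 ≤ t → S (s + t) = (S s).comp (S t))
    (hcontr : ∀ t : ℝ, 0 ≤ t → ‖S t‖ ≤ 1) (R : F →L[𝕜] G) (hR : ∀ v, ‖R v‖ ≤ ‖v‖)
    (P : F → F) {E δ τ : ℝ} (hτ : 0 < τ) (hE : 1 ≤ E) (g : F)
    (hcont : ContinuousOn (fun t => S t g) (Icc (τ / 2) τ))
    (hspec : ∀ v, ‖P v‖ ≤ E * ‖R (P v)‖)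
    (hdiss : ∀ t ∈ Icc (τ / 2) τ, ‖S t g - P (S t g)‖ ≤ δ) :
    τ / (4 * E ^ 2) * ‖S τ g‖ ^ 2 - 2 * τ * δ ^ 2 ≤ ∫ t in τ / 2..τ, ‖R (S t g)‖ ^ 2 := by
  have hpointwise : ∀ t ∈ Icc (τ / 2) τ,
      (‖S τ g‖ ^ 2 - 8 * E ^ 2 * δ ^ 2) / (2 * E ^ 2) ≤ ‖R (S t g)‖ ^ 2 := by
    intro t ht
    have hmono : ‖S τ g‖ ≤ ‖S t g‖ :=
      antitoneOn_norm_apply_of_contraction_semigroup hsemi hcontr g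
        (le_trans (by positivity) ht.1 : (0 : ℝ) ≤ t) hτ.le ht.2
    have := sq_norm_le_of_spectral_of_dissipation R hR hE (hspec _) (hdiss t ht)
    rw [div_le_iff₀ (by positivity)]
    nlinarith [pow_le_pow_left₀ (norm_nonneg _) hmono 2]
  have hint : IntervalIntegrable (fun t => ‖R (S t g)‖ ^ 2) volume (τ / 2) τ :=
    ContinuousOn.intervalIntegrable <| by
      rw [uIcc_of_le (by linarith)]
      exact ((R.continuous.comp_continuousOn hcont).norm).pow 2
  have := intervalIntegral.integral_mono_on (by linarith) intervalIntegrable_const hint hpointwise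
  rw [intervalIntegral.integral_const, smul_eq_mul] at this
  convert this using 1
  field_simp
  ring

end Observability

section Balance

open Real

theorem Real.exp_neg_mul_rpow_neg_le {γ τ : ℝ} (hγ : 0 < γ) (hτ : 0 < τ) (hτ1 : τ ≤ 1) :
    exp (-((3 + γ⁻¹) * τ ^ (-γ))) ≤ τ / 4 := by
  have hpow : 1 ≤ τ ^ (-γ) := one_le_rpow_of_pos_of_le_one_of_nonpos hτ hτ1 (by linarith)
  have hlog4 : log 4 ≤ 3 := (log_le_sub_one_of_pos (by norm_num)).trans (by norm_num)
  have hlogτ : -log τ ≤ γ⁻¹ * τ ^ (-γ) := by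
    have := log_le_self (rpow_nonneg hτ.le (-γ))
    rw [log_rpow hτ] at this
    rw [inv_mul_eq_div, le_div_iff₀ hγ]
    linarith
  rw [← exp_log (by positivity : 0 < τ / 4), exp_le_exp, log_div hτ.ne' (by norm_num)]
  nlinarith

theorem exists_one_le_add_le_mul_rpow {a b A B C : ℝ} (ha : 0 ≤ a) (hab : a < b) (hA : 0 ≤ A)
    (hB : 0 ≤ B) (hC : 0 < C) : ∃ K, 1 ≤ K ∧ A * K ^ a + B ≤ C * K ^ b := by
  set K := max 1 (((A + B) / C) ^ (b - a)⁻¹)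
  have hK : 1 ≤ K := le_max_left _ _
  refine ⟨K, hK, ?_⟩
  have hKa : 1 ≤ K ^ a := one_le_rpow hK ha
  have hKba : A + B ≤ C * K ^ (b - a) := by
    rw [← div_le_iff₀' hC]
    calc (A + B) / C = (((A + B) / C) ^ (b - a)⁻¹) ^ (b - a) := by
          rw [← rpow_mul (by positivity), inv_mul_cancel₀ (by linarith), rpow_one]
      _ ≤ K ^ (b - a) := rpow_le_rpow (by positivity) (le_max_right _ _) (by linarith)
  calc A * K ^ a + B ≤ (A + B) * K ^ a := by nlinarith
    _ ≤ C * K ^ (b - a) * K ^ a := by gcongr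
    _ = C * K ^ b := by rw [mul_assoc, ← rpow_add (by linarith), sub_add_cancel]

theorem exp_neg_div_rpow_le_div_sq_exp {c y A M γ τ : ℝ} (hγ : 0 < γ) (hτ : 0 < τ)
    (hτ1 : τ ≤ 1) (hy : c * y ≤ A * τ ^ (-γ)) (hM : 2 * A + 3 + γ⁻¹ ≤ M) :
    exp (-(M / τ ^ γ)) ≤ τ / (4 * exp (c * y) ^ 2) := by
  have hpow : 1 ≤ τ ^ (-γ) := one_le_rpow_of_pos_of_le_one_of_nonpos hτ hτ1 (by linarith)
  have hexponent : -(M / τ ^ γ) + 2 * (c * y) ≤ -((3 + γ⁻¹) * τ ^ (-γ)) := by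
    rw [div_eq_mul_inv, ← rpow_neg hτ.le]
    nlinarith
  rw [le_div_iff₀ (by positivity)]
  calc exp (-(M / τ ^ γ)) * (4 * exp (c * y) ^ 2)
      = 4 * exp (-(M / τ ^ γ) + 2 * (c * y)) := by
        rw [exp_add, ← exp_nat_mul]; push_cast; ring
    _ ≤ 4 * (τ / 4) := by grw [hexponent, exp_neg_mul_rpow_neg_le hγ hτ hτ1]
    _ = τ := by ring

theorem sq_mul_exp_neg_le {c L τ z : ℝ} (hc : 0 < c) (hτc : 2 * τ ≤ c ^ 2)
    (hL : L ≤ 2 * c * z) : 2 * τ * ((1 / c) * exp (-(c * z))) ^ 2 ≤ exp (-L) :=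
  calc 2 * τ * ((1 / c) * exp (-(c * z))) ^ 2 = 2 * τ / c ^ 2 * exp (-(2 * c * z)) := by
        rw [mul_pow, ← exp_nat_mul]; push_cast; ring_nf
    _ ≤ 1 * exp (-L) := by
        gcongr
        exact (div_le_one (by positivity)).2 hτc
    _ = exp (-L) := one_mul _

theorem exists_frequency_cutoff {c₁ c₂ a b m q : ℝ} (hc₁ : 0 ≤ c₁) (hc₂ : 0 < c₂) (ha : 0 < a)
    (hm : 0 < m) (hab : a < b) (hq : 0 < q) :
    ∃ M > 0, ∃ τ₁ > 0, ∀ τ, 0 < τ → τ < τ₁ → ∃ k : ℕ, 1 ≤ k ∧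
      exp (-(M / τ ^ (a * m / (b - a)))) ≤ τ / (4 * exp (c₁ * (k : ℝ) ^ a) ^ 2) ∧
      2 * τ * (1 / c₂ * exp (-(c₂ * (τ / 2) ^ m * (k : ℝ) ^ b))) ^ 2 ≤
        exp (-(M / (q * τ) ^ (a * m / (b - a)))) := by
  have hba : 0 < b - a := sub_pos.2 hab
  set γ := a * m / (b - a)
  set ε := m / (b - a)
  have hγ : 0 < γ := by positivity
  have hεa : ε * a = γ := by simp only [γ, ε]; ring
  have hεb : m - ε * b = -γ := by simp only [γ, ε]; field_simp; ring
  obtain ⟨K, hK, hKab⟩ := exists_one_le_add_le_mul_rpow (A := 2 * c₁ * 2 ^ a) (B := 3 + γ⁻¹)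
    (C := 2 * c₂ / 2 ^ m * q ^ γ) ha.le hab (by positivity) (by positivity) (by positivity)
  refine ⟨2 * c₂ / 2 ^ m * q ^ γ * K ^ b, by positivity, min 1 (c₂ ^ 2 / 2),
    by positivity, fun τ hτ hτ₁ => ?_⟩
  have hτ1 : τ ≤ 1 := (hτ₁.trans_le (min_le_left _ _)).le
  have hτc : 2 * τ ≤ c₂ ^ 2 := by linarith [hτ₁.trans_le (min_le_right _ _)]
  have hx : 1 ≤ K * τ ^ (-ε) :=
    one_le_mul_of_one_le_of_one_le hK
      (one_le_rpow_of_pos_of_le_one_of_nonpos hτ hτ1 (neg_nonpos.2 (by positivity)))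
  set k := ⌈K * τ ^ (-ε)⌉₊
  refine ⟨k, Nat.one_le_ceil_iff.2 (by linarith), ?_, ?_⟩
  · have hk : (k : ℝ) ^ a ≤ 2 ^ a * K ^ a * τ ^ (-γ) :=
      calc (k : ℝ) ^ a ≤ (2 * (K * τ ^ (-ε))) ^ a :=
            rpow_le_rpow (by positivity) (Nat.ceil_le_two_mul (by linarith)) ha.le
        _ = 2 ^ a * K ^ a * τ ^ (-γ) := by
            rw [mul_rpow (by norm_num) (by positivity), mul_rpow (by positivity) (by positivity),
              ← rpow_mul hτ.le, neg_mul, hεa, mul_assoc]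
    refine exp_neg_div_rpow_le_div_sq_exp (A := c₁ * 2 ^ a * K ^ a) hγ hτ hτ1 ?_ (by linarith)
    calc c₁ * (k : ℝ) ^ a ≤ c₁ * (2 ^ a * K ^ a * τ ^ (-γ)) := by gcongr
      _ = _ := by ring
  · have hk : K ^ b * τ ^ (-γ) ≤ τ ^ m * (k : ℝ) ^ b :=
      calc K ^ b * τ ^ (-γ) = τ ^ m * (K * τ ^ (-ε)) ^ b := by
            rw [mul_rpow (by positivity) (by positivity), ← rpow_mul hτ.le, ← hεb,
              sub_eq_add_neg, rpow_add hτ, neg_mul]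
            ring
        _ ≤ τ ^ m * (k : ℝ) ^ b := by
            gcongr
            exacts [by linarith, Nat.le_ceil _]
    rw [mul_assoc c₂]
    refine sq_mul_exp_neg_le hc₂ hτc ?_
    calc 2 * c₂ / 2 ^ m * q ^ γ * K ^ b / (q * τ) ^ γ = 2 * c₂ / 2 ^ m * (K ^ b * τ ^ (-γ)) := by
          rw [mul_rpow hq.le hτ.le, rpow_neg hτ.le]
          field_simp
      _ ≤ 2 * c₂ / 2 ^ m * (τ ^ m * (k : ℝ) ^ b) := by gcongr
      _ = 2 * c₂ * ((τ / 2) ^ m * (k : ℝ) ^ b) := by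
          rw [div_rpow hτ.le (by norm_num)]
          ring

end Balance

theorem stmt4_general {n : ℕ} (Ω ω : Set (EuclideanSpace ℝ (Fin n)))
    (hωΩ : ω ⊆ Ω)
    (S : ℝ → Lp ℂ 2 (volume.restrict Ω) →L[ℂ] Lp ℂ 2 (volume.restrict Ω))
    (π : ℕ → Lp ℂ 2 (volume.restrict Ω) →L[ℂ] Lp ℂ 2 (volume.restrict Ω))
    (hSsemi : ∀ s t : ℝ, 0 ≤ s → 0 ≤ t → S (s + t) = (S s).comp (S t))
    (hScont : ∀ g, ContinuousOn (fun t => S t g) (Set.Ici (0:ℝ)))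
    (hScontr : ∀ t : ℝ, 0 ≤ t → ‖S t‖ ≤ 1)
    (c₁ c₂ a b t₀ m : ℝ)
    (hc₁ : 0 < c₁) (hc₂ : 0 < c₂) (ha : 0 < a) (ht₀ : 0 < t₀)
    (hm : 0 < m) (hab : a < b)
    (hspec : ∀ g, ∀ k : ℕ, 1 ≤ k →
      ‖π k g‖ ≤ Real.exp (c₁ * (k : ℝ) ^ a) *
        Real.sqrt (∫ x in ω, ‖(π k g) x‖ ^ 2 ∂volume))
    (hdiss : ∀ g, ∀ k : ℕ, 1 ≤ k → ∀ t : ℝ, 0 < t → t < t₀ →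
      ‖S t g - π k (S t g)‖ ≤
        (1 / c₂) * Real.exp (-(c₂ * t ^ m * (k : ℝ) ^ b)) * ‖g‖) :
    ∀ q : ℝ, 0 < q → ∃ τ₀' M : ℝ, 0 < τ₀' ∧ τ₀' < t₀ ∧ 0 < M ∧
      ∀ τ : ℝ, 0 < τ → τ < τ₀' → ∀ g,
        Real.exp (-(M / τ ^ (a * m / (b - a)))) * ‖S τ g‖ ^ 2 -
            Real.exp (-(M / (q * τ) ^ (a * m / (b - a)))) * ‖g‖ ^ 2 ≤
          ∫ t in (τ / 2)..τ, ∫ x in ω, ‖(S t g) x‖ ^ 2 ∂volume := by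
  intro q hq
  obtain ⟨M, hM, τ₁, hτ₁, hbalance⟩ := exists_frequency_cutoff hc₁.le hc₂ ha hm hab hq
  have ht₀' : min (t₀ / 2) τ₁ < t₀ := (min_le_left _ _).trans_lt (half_lt_self ht₀)
  refine ⟨min (t₀ / 2) τ₁, M, by positivity, ht₀', hM, fun τ hτ hττ₀ g => ?_⟩
  obtain ⟨k, hk, hcost, hgain⟩ := hbalance τ hτ (hττ₀.trans_le (min_le_right _ _))
  set R := LpToLpRestrictCLM (EuclideanSpace ℝ (Fin n)) ℂ ℂ (volume.restrict Ω) 2 ω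
  have hobs : ∀ v, ∫ x in ω, ‖v x‖ ^ 2 ∂volume = ‖R v‖ ^ 2 := fun v => by
    rw [← setIntegral_norm_sq_eq_norm_LpToLpRestrictCLM_sq, Measure.restrict_restrict_of_subset hωΩ]
  set D := 1 / c₂ * Real.exp (-(c₂ * (τ / 2) ^ m * (k : ℝ) ^ b))
  have hdecay : ∀ t ∈ Icc (τ / 2) τ, ‖S t g - π k (S t g)‖ ≤ D * ‖g‖ := fun t ht => by
    refine (hdiss g k hk t (by linarith [ht.1]) (ht.2.trans_lt (hττ₀.trans ht₀'))).trans ?_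
    dsimp only [D]
    gcongr
    exact ht.1
  have hcont : ContinuousOn (fun t => S t g) (Icc (τ / 2) τ) :=
    (hScont g).mono fun t ht => mem_Ici.2 (by linarith [ht.1])
  have hobserve := integral_sq_norm_observation_ge hSsemi hScontr R (norm_Lp_toLp_restrict_le ω)
    (π k) hτ (Real.one_le_exp (by positivity : 0 ≤ c₁ * (k : ℝ) ^ a)) g hcont
    (fun v => by simpa only [hobs, Real.sqrt_sq (norm_nonneg _)] using hspec v k hk) hdecay
  simp_rw [hobs]
  refine le_trans (sub_le_sub (mul_le_mul_of_nonneg_right hcost (sq_nonneg _)) ?_) hobserve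
  rw [mul_pow, ← mul_assoc]
  exact mul_le_mul_of_nonneg_right hgain (sq_nonneg _)

/-- one-step estimate in the adapted Lebeau-Robbiano method. Under the
hypotheses of the abstract observability theorem, for every `q > 0` there exist
`0 < τ₀'(q) < t₀` and `M(q) > 0` such that for all `0 < τ < τ₀'(q)` and all `g`,
`f_q(τ)‖S τ g‖² − f_q(qτ)‖g‖² ≤ ∫_{τ/2}^{τ} ‖S t g‖²_{L²(ω)} dt`,
where `f_q(s) = exp(−M(q)/s^{am/(b-a)})`. -/
theorem stmt4 {n : ℕ} (Ω ω : Set (EuclideanSpace ℝ (Fin n)))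
    (hΩ : IsOpen Ω) (hω : IsOpen ω) (hωΩ : ω ⊆ Ω)
    (S : ℝ → Lp ℂ 2 (volume.restrict Ω) →L[ℂ] Lp ℂ 2 (volume.restrict Ω))
    (π : ℕ → Lp ℂ 2 (volume.restrict Ω) →L[ℂ] Lp ℂ 2 (volume.restrict Ω))
    (hS0 : S 0 = ContinuousLinearMap.id ℂ _)
    (hSsemi : ∀ s t : ℝ, 0 ≤ s → 0 ≤ t → S (s + t) = (S s).comp (S t))
    (hScont : ∀ g, ContinuousOn (fun t => S t g) (Set.Ici (0:ℝ)))
    (hScontr : ∀ t : ℝ, 0 ≤ t → ‖S t‖ ≤ 1)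
    (hπsa : ∀ k, IsSelfAdjoint (π k))
    (hπidem : ∀ k, IsIdempotentElem (π k))
    (c₁ c₂ a b t₀ m : ℝ)
    (hc₁ : 0 < c₁) (hc₂ : 0 < c₂) (ha : 0 < a) (hb : 0 < b) (ht₀ : 0 < t₀)
    (hm : 0 < m) (hab : a < b)
    (hspec : ∀ g, ∀ k : ℕ, 1 ≤ k →
      ‖π k g‖ ≤ Real.exp (c₁ * (k : ℝ) ^ a) *
        Real.sqrt (∫ x in ω, ‖(π k g) x‖ ^ 2 ∂volume))
    (hdiss : ∀ g, ∀ k : ℕ, 1 ≤ k → ∀ t : ℝ, 0 < t → t < t₀ →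
      ‖S t g - π k (S t g)‖ ≤
        (1 / c₂) * Real.exp (-(c₂ * t ^ m * (k : ℝ) ^ b)) * ‖g‖) :
    ∀ q : ℝ, 0 < q → ∃ τ₀' M : ℝ, 0 < τ₀' ∧ τ₀' < t₀ ∧ 0 < M ∧
      ∀ τ : ℝ, 0 < τ → τ < τ₀' → ∀ g,
        Real.exp (-(M / τ ^ (a * m / (b - a)))) * ‖S τ g‖ ^ 2 -
            Real.exp (-(M / (q * τ) ^ (a * m / (b - a)))) * ‖g‖ ^ 2 ≤
          ∫ t in (τ / 2)..τ, ∫ x in ω, ‖(S t g) x‖ ^ 2 ∂volume :=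
  stmt4_general Ω ω hωΩ S π hSsemi hScont hScontr c₁ c₂ a b t₀ m hc₁ hc₂ ha ht₀ hm hab hspec hdiss
end

section
/- Characterization of the singular space via Poisson brackets: let q: ℝ²ⁿ → ℂ be a quadratic form with Re q ≥ 0 and Hamilton map F. Then the singular space S = (⋂_{j=0}^{2n-1} Ker[Re F (Im F)ʲ]) ∩ ℝ²ⁿ equals {X ∈ ℝ²ⁿ : (H_{Im q}^k Re q)(X) = 0 for all k ≥ 0}, i.e., the set of points where Re q vanishes to infinite order along the flow of the Hamilton vector field of Im q; equivalently, X ∈ S if and only if t ↦ Re q(e^{tH_{Im q}}X) is identically zero on ℝ. -/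
open Matrix

noncomputable section

/-- The matrix of the standard symplectic form `σ((x,ξ),(y,η)) = ⟨ξ,y⟩ − ⟨x,η⟩` on
`ℝⁿ_x × ℝⁿ_ξ`, so that `σ(X,Y) = X ⬝ᵥ (J.mulVec Y)`. -/
def symplJ (n : ℕ) : Matrix (Fin n ⊕ Fin n) (Fin n ⊕ Fin n) ℂ :=
  Matrix.fromBlocks 0 (-1) 1 0

/-- The Hamilton map `F` of the quadratic form with symmetric matrix `M`
(`q(X,Y) = Xᵀ M Y`), defined by `q(X,Y) = σ(X, F Y)`; explicitly `F = -J M`. -/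
def hamiltonMap {n : ℕ} (M : Matrix (Fin n ⊕ Fin n) (Fin n ⊕ Fin n) ℂ) :
    Matrix (Fin n ⊕ Fin n) (Fin n ⊕ Fin n) ℂ :=
  -(symplJ n) * M

/-- Real part of the Hamilton map. -/
def reF {n : ℕ} (M : Matrix (Fin n ⊕ Fin n) (Fin n ⊕ Fin n) ℂ) :
    Matrix (Fin n ⊕ Fin n) (Fin n ⊕ Fin n) ℝ :=
  fun i j => (hamiltonMap M i j).re

/-- Imaginary part of the Hamilton map. -/
def imF {n : ℕ} (M : Matrix (Fin n ⊕ Fin n) (Fin n ⊕ Fin n) ℂ) :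
    Matrix (Fin n ⊕ Fin n) (Fin n ⊕ Fin n) ℝ :=
  fun i j => (hamiltonMap M i j).im

/-- Real part of the symmetric matrix of `q`, so that `Re q(X) = X ⬝ᵥ (Re M).mulVec X` for
real `X`. -/
def reM {n : ℕ} (M : Matrix (Fin n ⊕ Fin n) (Fin n ⊕ Fin n) ℂ) :
    Matrix (Fin n ⊕ Fin n) (Fin n ⊕ Fin n) ℝ :=
  fun i j => (M i j).re

/-- The flow `e^{tH_{Im q}}` of the (linear) Hamilton vector field of `Im q`, which is
`X ↦ exp(2t Im F) X`. -/
def imFlow {n : ℕ} (M : Matrix (Fin n ⊕ Fin n) (Fin n ⊕ Fin n) ℂ) (t : ℝ)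
    (X : Fin n ⊕ Fin n → ℝ) : Fin n ⊕ Fin n → ℝ :=
  (NormedSpace.exp ((2 * t) • imF M)).mulVec X

/-!
A real point `X` lies in the singular space iff `Re M (Im F)ʲ X = 0` for `j < 2n`, since
`Re F = -J Re M` with `J` invertible. By Cayley–Hamilton this holds for `j < 2n` iff it holds
for all `j`, i.e. iff all derivatives at `0` of the analytic curve `t ↦ Re M e^{2t Im F} X`
vanish, i.e. iff that curve vanishes identically. As `Re M` is positive semidefinite, this is
the same as `Re q(e^{tH_{Im q}} X) = 0` for all `t`; and since `t ↦ Re q(e^{tH_{Im q}} X)` is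
analytic, that in turn is equivalent to its vanishing to infinite order at `t = 0`.
-/

open Matrix NormedSpace

theorem AnalyticOnNhd.forall_eq_zero_iff_iteratedDeriv_eq_zero {𝕜 E : Type*} [RCLike 𝕜]
    [NormedAddCommGroup E] [NormedSpace 𝕜 E] [CompleteSpace E] {f : 𝕜 → E}
    (hf : AnalyticOnNhd 𝕜 f Set.univ) (x₀ : 𝕜) :
    (∀ x, f x = 0) ↔ ∀ k, iteratedDeriv k f x₀ = 0 := by
  constructor
  · intro h k
    simp [show f = fun _ => 0 from funext h]
  · intro h x
    have htop : analyticOrderAt f x₀ = ⊤ := ENat.eq_top_iff_forall_ge.2 fun m =>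
      (natCast_le_analyticOrderAt_iff_iteratedDeriv_eq_zero (hf x₀ trivial)).2 fun i _ => h i
    exact hf.eqOn_zero_of_preconnected_of_eventuallyEq_zero isPreconnected_univ (Set.mem_univ x₀)
      (analyticOrderAt_eq_top.1 htop) (Set.mem_univ x)

theorem AnalyticAt.dotProduct_mulVec {ι : Type*} [Fintype ι] {v : ℝ → ι → ℝ} {t : ℝ}
    (hv : AnalyticAt ℝ v t) (Q : Matrix ι ι ℝ) : AnalyticAt ℝ (fun s => v s ⬝ᵥ Q *ᵥ v s) t := by
  have hvi : ∀ i, AnalyticAt ℝ (fun s => v s i) t := fun i =>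
    (ContinuousLinearMap.proj (R := ℝ) (φ := fun _ : ι => ℝ) i).analyticAt _ |>.comp hv
  simp only [dotProduct, mulVec]
  fun_prop

namespace Matrix

variable {ι : Type*} [Fintype ι] [DecidableEq ι]

open Polynomial in
theorem pow_mem_span_pow_lt_card {R : Type*} [CommRing R] [Nontrivial R] (A : Matrix ι ι R)
    (k : ℕ) : A ^ k ∈ Submodule.span R ((A ^ ·) '' Set.Iio (Fintype.card ι)) := by
  cases isEmpty_or_nonempty ι
  · simp [Subsingleton.elim (A ^ k) 0]
  have hdeg : (X ^ k %ₘ A.charpoly).natDegree < Fintype.card ι := by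
    rw [← A.charpoly_natDegree_eq_dim]
    refine natDegree_modByMonic_lt _ A.charpoly_monic fun h => ?_
    exact Fintype.card_ne_zero (α := ι) (by simpa [h] using A.charpoly_natDegree_eq_dim.symm)
  rw [pow_eq_aeval_mod_charpoly, aeval_eq_sum_range' hdeg]
  exact Submodule.sum_mem _ fun i hi =>
    Submodule.smul_mem _ _ (Submodule.subset_span ⟨i, Finset.mem_range.1 hi, rfl⟩)

def mulLeftMulVec {R : Type*} [CommRing R] (P : Matrix ι ι R) (X : ι → R) :
    Matrix ι ι R →ₗ[R] ι → R :=
  (mulVecBilin R R).flip X ∘ₗ LinearMap.mulLeft R P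

theorem forall_lt_card_mul_pow_mulVec_eq_zero_iff {R : Type*} [CommRing R] [Nontrivial R]
    (P A : Matrix ι ι R) (X : ι → R) :
    (∀ j < Fintype.card ι, (P * A ^ j) *ᵥ X = 0) ↔ ∀ k, (P * A ^ k) *ᵥ X = 0 := by
  refine ⟨fun h k => ?_, fun h j _ => h j⟩
  have hspan : Submodule.span R ((A ^ ·) '' Set.Iio (Fintype.card ι)) ≤
      LinearMap.ker (mulLeftMulVec P X) :=
    Submodule.span_le.2 <| by
      rintro _ ⟨j, hj, rfl⟩
      exact h j hj
  exact hspan (pow_mem_span_pow_lt_card A k)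

theorem mul_smul_pow_mulVec_eq_zero_iff {K : Type*} [Field K] (P A : Matrix ι ι K)
    (X : ι → K) {c : K} (hc : c ≠ 0) (k : ℕ) :
    (P * (c • A) ^ k) *ᵥ X = 0 ↔ (P * A ^ k) *ᵥ X = 0 := by
  rw [_root_.smul_pow, Matrix.mul_smul, smul_mulVec, smul_eq_zero, or_iff_right (pow_ne_zero k hc)]

section exp

-- Any normed-algebra structure on matrices induces the product topology, so `exp` is unchanged.
attribute [local instance] Matrix.linftyOpNormedRing Matrix.linftyOpNormedAlgebra

theorem hasDerivAt_mul_exp_smul_mulVec (P A : Matrix ι ι ℝ) (X : ι → ℝ) (t : ℝ) :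
    HasDerivAt (fun s : ℝ => (P * exp (s • A)) *ᵥ X) ((P * A * exp (t • A)) *ᵥ X) t := by
  rw [Matrix.mul_assoc]
  exact (mulLeftMulVec P X).toContinuousLinearMap.hasFDerivAt.comp_hasDerivAt t
    (hasDerivAt_exp_smul_const' A t)

theorem iteratedDeriv_mul_exp_smul_mulVec (P A : Matrix ι ι ℝ) (X : ι → ℝ) (k : ℕ) :
    iteratedDeriv k (fun s : ℝ => (P * exp (s • A)) *ᵥ X) =
      fun t => (P * A ^ k * exp (t • A)) *ᵥ X := by
  induction k with
  | zero => simp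
  | succ k ih =>
    rw [iteratedDeriv_succ, ih, pow_succ, ← Matrix.mul_assoc]
    exact funext fun t => (hasDerivAt_mul_exp_smul_mulVec _ A X t).deriv

theorem analyticAt_mul_exp_smul_mulVec (P A : Matrix ι ι ℝ) (X : ι → ℝ) (t : ℝ) :
    AnalyticAt ℝ (fun s : ℝ => (P * exp (s • A)) *ᵥ X) t :=
  (mulLeftMulVec P X).toContinuousLinearMap.analyticAt _ |>.comp <|
    (exp_analytic (t • A)).comp (f := fun s : ℝ => s • A) (analyticAt_id.smul analyticAt_const)

theorem forall_mul_exp_smul_mulVec_eq_zero_iff (P A : Matrix ι ι ℝ) (X : ι → ℝ) :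
    (∀ t : ℝ, (P * exp (t • A)) *ᵥ X = 0) ↔ ∀ k, (P * A ^ k) *ᵥ X = 0 := by
  rw [AnalyticOnNhd.forall_eq_zero_iff_iteratedDeriv_eq_zero
    (fun t _ => analyticAt_mul_exp_smul_mulVec P A X t) 0]
  simp [iteratedDeriv_mul_exp_smul_mulVec]

end exp

end Matrix

def symplJR (n : ℕ) : Matrix (Fin n ⊕ Fin n) (Fin n ⊕ Fin n) ℝ :=
  fromBlocks 0 (-1) 1 0

section HamiltonMap

variable {n : ℕ} (M : Matrix (Fin n ⊕ Fin n) (Fin n ⊕ Fin n) ℂ)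

theorem symplJR_mul_neg_symplJR : symplJR n * -symplJR n = 1 := by
  rw [symplJR, mul_neg, fromBlocks_multiply, ← fromBlocks_one]
  simp [fromBlocks_neg]

theorem reF_eq_neg_symplJR_mul_reM : reF M = -symplJR n * reM M := by
  ext i j
  simp only [reF, hamiltonMap, reM, mul_apply, Complex.re_sum]
  refine Finset.sum_congr rfl fun k _ => ?_
  have hJ : symplJ n i k = (symplJR n i k : ℂ) := by
    cases i <;> cases k <;> simp [symplJ, symplJR, fromBlocks, one_apply, apply_ite]
  simp [hJ, Complex.mul_re]

theorem reF_mul_mulVec_eq_zero_iff (B : Matrix (Fin n ⊕ Fin n) (Fin n ⊕ Fin n) ℝ)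
    (X : Fin n ⊕ Fin n → ℝ) : (reF M * B) *ᵥ X = 0 ↔ (reM M * B) *ᵥ X = 0 := by
  rw [reF_eq_neg_symplJR_mul_reM, Matrix.mul_assoc, ← mulVec_mulVec]
  refine ⟨fun h => ?_, fun h => by rw [h, mulVec_zero]⟩
  rw [← one_mulVec ((reM M * B) *ᵥ X), ← symplJR_mul_neg_symplJR, ← mulVec_mulVec, h,
    mulVec_zero]

theorem reM_posSemidef (hMsym : Mᵀ = M)
    (hRe : ∀ X : Fin n ⊕ Fin n → ℝ, 0 ≤ X ⬝ᵥ (reM M).mulVec X) : (reM M).PosSemidef := by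
  refine PosSemidef.of_dotProduct_mulVec_nonneg ?_ fun X => by simpa using hRe X
  ext i j
  simpa [reM] using congrArg Complex.re (congrFun (congrFun hMsym i) j)

theorem imFlow_eq (t : ℝ) (X : Fin n ⊕ Fin n → ℝ) :
    imFlow M t X = exp (t • (2 : ℝ) • imF M) *ᵥ X := by
  rw [imFlow, smul_smul, mul_comm]

theorem analyticAt_imFlow (X : Fin n ⊕ Fin n → ℝ) (t : ℝ) :
    AnalyticAt ℝ (fun s => imFlow M s X) t := by
  simpa [imFlow_eq] using analyticAt_mul_exp_smul_mulVec 1 ((2 : ℝ) • imF M) X t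

end HamiltonMap

/-- characterization of the singular space via Poisson brackets. For a
quadratic form `q` (with symmetric matrix `M`) with `Re q ≥ 0` and Hamilton map `F`, the
singular space `S = (⋂_{j=0}^{2n-1} Ker[Re F (Im F)ʲ]) ∩ ℝ²ⁿ` equals the set of points where
`t ↦ Re q(e^{tH_{Im q}}X)` vanishes to infinite order at `t = 0`, and equals the set of
points where this function vanishes identically on `ℝ`. -/
theorem stmt14 {n : ℕ} (M : Matrix (Fin n ⊕ Fin n) (Fin n ⊕ Fin n) ℂ)
    (hMsym : Mᵀ = M)
    (hRe : ∀ X : Fin n ⊕ Fin n → ℝ, 0 ≤ X ⬝ᵥ (reM M).mulVec X) :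
    ({X : Fin n ⊕ Fin n → ℝ | ∀ j < 2 * n, (reF M * imF M ^ j).mulVec X = 0} =
      {X : Fin n ⊕ Fin n → ℝ | ∀ k : ℕ,
        iteratedDeriv k (fun t : ℝ => imFlow M t X ⬝ᵥ (reM M).mulVec (imFlow M t X)) 0 = 0}) ∧
    ({X : Fin n ⊕ Fin n → ℝ | ∀ j < 2 * n, (reF M * imF M ^ j).mulVec X = 0} =
      {X : Fin n ⊕ Fin n → ℝ | ∀ t : ℝ,
        imFlow M t X ⬝ᵥ (reM M).mulVec (imFlow M t X) = 0}) := by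
  have hcard : Fintype.card (Fin n ⊕ Fin n) = 2 * n := by simp [two_mul]
  have hPSD := reM_posSemidef M hMsym hRe
  have hsingular : ∀ X, (∀ j < 2 * n, (reF M * imF M ^ j) *ᵥ X = 0) ↔
      ∀ t : ℝ, imFlow M t X ⬝ᵥ reM M *ᵥ imFlow M t X = 0 := fun X => calc
    _ ↔ ∀ j < Fintype.card (Fin n ⊕ Fin n), (reM M * imF M ^ j) *ᵥ X = 0 := by
      simp only [reF_mul_mulVec_eq_zero_iff, hcard]
    _ ↔ ∀ k, (reM M * ((2 : ℝ) • imF M) ^ k) *ᵥ X = 0 := by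
      simp only [forall_lt_card_mul_pow_mulVec_eq_zero_iff,
        mul_smul_pow_mulVec_eq_zero_iff _ _ _ (two_ne_zero (α := ℝ))]
    _ ↔ ∀ t : ℝ, (reM M * exp (t • (2 : ℝ) • imF M)) *ᵥ X = 0 :=
      (forall_mul_exp_smul_mulVec_eq_zero_iff _ _ _).symm
    _ ↔ _ := forall_congr' fun t => by
      rw [imFlow_eq, ← mulVec_mulVec, ← hPSD.dotProduct_mulVec_zero_iff, star_trivial]
  refine ⟨Set.ext fun X => (hsingular X).trans ?_, Set.ext hsingular⟩
  exact AnalyticOnNhd.forall_eq_zero_iff_iteratedDeriv_eq_zero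
    (fun t _ => (analyticAt_imFlow M X t).dotProduct_mulVec (reM M)) 0
end
end
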